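/- arXiv:2208.10476 — 3 statements merged into one kernel-verified Lean document; each statement's English description precedes it below -/
import Mathlib

section
/- The set P_n of partitions with n parts (weakly increasing sequences of n non-negative integers), ordered by dominance (μ ⊴ λ iff for all k, μ_k + μ_{k+1} + ... + μ_n ≤ λ_k + ... + λ_n), forms a lattice. -/
/-- The dominance order on `n`-tuples: `μ ⊴ λ` iff all tail sums of `μ` are
bounded by the corresponding tail sums of `λ`. -/
def dominates (n : ℕ) (μ lam : Fin n → ℕ) : Prop :=
  ∀ k : Fin n, ∑ i ∈ Finset.Ici k, μ i ≤ ∑ i ∈ Finset.Ici k, lam i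

/-- `P_n`: the set of partitions with `n` parts, i.e. weakly increasing
`n`-tuples of non-negative integers. -/
def PartitionN (n : ℕ) := {l : Fin n → ℕ // Monotone l}

/-!
A partition `λ ∈ P_n` is determined by its tail sums `T k = λ_k + ⋯ + λ_n`, and the sequences
that arise are exactly the antitone, concave sequences vanishing from `n` on. Dominance is the
pointwise order on tail sums, and a pointwise minimum of concave sequences is concave, so the
meet of `μ` and `λ` is the partition with tail sums `min T_μ T_λ`. Since tail sums are natural
numbers the order is well founded, and `μ + λ` bounds both `μ` and `λ`, so the set of common
upper bounds has a minimal element; being closed under meets, it then has a least element, the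
join.
-/

section Lattice

variable {α : Type*} [SemilatticeInf α]

theorem infClosed_upperBounds (s : Set α) : InfClosed (upperBounds s) :=
  fun _ ha _ hb _ hx => le_inf (ha hx) (hb hx)

variable [WellFoundedLT α]

theorem InfClosed.exists_isLeast {s : Set α} (hs : InfClosed s) (hne : s.Nonempty) :
    ∃ a, IsLeast s a := by
  obtain ⟨a, ha⟩ := exists_minimal_of_wellFoundedLT (· ∈ s) hne
  exact ⟨a, ha.prop, fun b hb => inf_eq_left.mp (ha.eq_of_le (hs ha.prop hb) inf_le_left)⟩

theorem BddAbove.exists_isLUB {s : Set α} (hs : BddAbove s) : ∃ a, IsLUB s a :=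
  (infClosed_upperBounds s).exists_isLeast hs

end Lattice

section TailSum

variable {n : ℕ}

/-- Indexed by `k : ℕ` rather than `Fin n` so that the empty tail `k = n` is available. -/
def tailSum (f : Fin n → ℕ) (k : ℕ) : ℕ :=
  ∑ i : Fin n with k ≤ i.val, f i

theorem sum_Ici_eq_tailSum (f : Fin n → ℕ) (k : Fin n) :
    ∑ i ∈ Finset.Ici k, f i = tailSum f k := by
  unfold tailSum
  refine Finset.sum_congr (Finset.ext fun i => ?_) fun _ _ => rfl
  simp only [Finset.mem_Ici, Finset.mem_filter, Finset.mem_univ, true_and, Fin.le_def]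

theorem tailSum_of_le (f : Fin n → ℕ) {k : ℕ} (hk : n ≤ k) : tailSum f k = 0 :=
  Finset.sum_eq_zero fun i hi => by
    have := (Finset.mem_filter.mp hi).2
    omega

theorem tailSum_eq_add (f : Fin n → ℕ) {k : ℕ} (hk : k < n) :
    tailSum f k = f ⟨k, hk⟩ + tailSum f (k + 1) := by
  unfold tailSum
  rw [← Finset.sum_insert (by simp)]
  congr 1
  ext i
  simp only [Finset.mem_filter, Finset.mem_univ, true_and, Finset.mem_insert, Fin.ext_iff]
  omega

theorem tailSum_add (f g : Fin n → ℕ) (k : ℕ) :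
    tailSum (f + g) k = tailSum f k + tailSum g k :=
  Finset.sum_add_distrib

theorem tailSum_antitone (f : Fin n → ℕ) : Antitone (tailSum f) :=
  fun _ _ hab => Finset.sum_le_sum_of_subset fun i => by
    simp only [Finset.mem_filter, Finset.mem_univ, true_and]
    omega

theorem tailSum_injective : Function.Injective (tailSum (n := n)) := by
  intro f g h
  funext i
  have hf := tailSum_eq_add f i.isLt
  have hg := tailSum_eq_add g i.isLt
  rw [h] at hf
  simp only [Fin.eta] at hf hg
  omega

theorem dominates_iff_tailSum_le {f g : Fin n → ℕ} :
    dominates n f g ↔ ∀ k, tailSum f k ≤ tailSum g k := by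
  refine ⟨fun h k => ?_, fun h k => by simpa only [sum_Ici_eq_tailSum] using h k⟩
  by_cases hk : k < n
  · simpa only [sum_Ici_eq_tailSum] using h ⟨k, hk⟩
  · simp [tailSum_of_le f (not_lt.mp hk)]

structure IsTailSumSeq (n : ℕ) (g : ℕ → ℕ) : Prop where
  antitone : Antitone g
  eq_zero : g n = 0
  concave : ∀ k, k + 2 ≤ n → g k + g (k + 2) ≤ 2 * g (k + 1)

theorem isTailSumSeq_tailSum {f : Fin n → ℕ} (hf : Monotone f) :
    IsTailSumSeq n (tailSum f) where
  antitone := tailSum_antitone f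
  eq_zero := tailSum_of_le f le_rfl
  concave k hk := by
    have h₀ := tailSum_eq_add f (k := k) (by omega)
    have h₁ := tailSum_eq_add f (k := k + 1) (by omega)
    rw [show k + 1 + 1 = k + 2 from rfl] at h₁
    have hmono : f ⟨k, by omega⟩ ≤ f ⟨k + 1, hk⟩ := hf (Fin.mk_le_mk.mpr k.le_succ)
    omega

theorem IsTailSumSeq.min {g h : ℕ → ℕ} (hg : IsTailSumSeq n g) (hh : IsTailSumSeq n h) :
    IsTailSumSeq n fun k => min (g k) (h k) where
  antitone _ _ hab := min_le_min (hg.antitone hab) (hh.antitone hab)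
  eq_zero := by simp [hg.eq_zero]
  concave k hk := by
    have := hg.concave k hk
    have := hh.concave k hk
    omega

def ofTailSum (g : ℕ → ℕ) : Fin n → ℕ := fun i => g i - g (i + 1)

theorem IsTailSumSeq.monotone_ofTailSum {g : ℕ → ℕ} (hg : IsTailSumSeq n g) :
    Monotone (ofTailSum (n := n) g) := by
  have hdiff : MonotoneOn (fun k => g k - g (k + 1)) (Set.Iio n) :=
    monotoneOn_of_le_add_one Set.ordConnected_Iio fun k _ _ hk => by
      have := hg.concave k hk
      have := hg.antitone (show k + 1 ≤ k + 2 by omega)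
      have := hg.antitone k.le_succ
      simp only [Set.mem_Iio] at hk
      show g k - g (k + 1) ≤ g (k + 1) - g (k + 2)
      omega
  exact fun i j hij => hdiff i.isLt j.isLt hij

theorem IsTailSumSeq.tailSum_ofTailSum {g : ℕ → ℕ} (hg : IsTailSumSeq n g) :
    tailSum (ofTailSum (n := n) g) = g := by
  funext k
  induction hd : n - k generalizing k with
  | zero =>
    rw [tailSum_of_le _ (by omega)]
    exact (Nat.eq_zero_of_le_zero (hg.eq_zero ▸ hg.antitone (by omega))).symm
  | succ d ih =>
    rw [tailSum_eq_add _ (by omega), ih (k + 1) (by omega)]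
    exact Nat.sub_add_cancel (hg.antitone k.le_succ)

end TailSum

namespace PartitionN

variable {n : ℕ}

instance : PartialOrder (PartitionN n) where
  le μ lam := dominates n μ.1 lam.1
  le_refl _ _ := le_rfl
  le_trans _ _ _ h₁ h₂ k := (h₁ k).trans (h₂ k)
  le_antisymm μ lam h₁ h₂ := Subtype.ext <| tailSum_injective <| funext fun k =>
    le_antisymm (dominates_iff_tailSum_le.mp h₁ k) (dominates_iff_tailSum_le.mp h₂ k)

theorem le_def {μ lam : PartitionN n} : μ ≤ lam ↔ dominates n μ.1 lam.1 :=
  Iff.rfl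

theorem le_iff_tailSum_le {μ lam : PartitionN n} :
    μ ≤ lam ↔ ∀ k, tailSum μ.1 k ≤ tailSum lam.1 k :=
  dominates_iff_tailSum_le

def ofTailSumSeq (g : ℕ → ℕ) (hg : IsTailSumSeq n g) : PartitionN n :=
  ⟨ofTailSum g, hg.monotone_ofTailSum⟩

theorem tailSum_ofTailSumSeq {g : ℕ → ℕ} (hg : IsTailSumSeq n g) (k : ℕ) :
    tailSum (ofTailSumSeq g hg).1 k = g k :=
  congrFun hg.tailSum_ofTailSum k

noncomputable instance : SemilatticeInf (PartitionN n) where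
  inf μ lam := ofTailSumSeq _ ((isTailSumSeq_tailSum μ.2).min (isTailSumSeq_tailSum lam.2))
  inf_le_left _ _ := le_iff_tailSum_le.mpr fun k => by
    rw [tailSum_ofTailSumSeq]; exact min_le_left _ _
  inf_le_right _ _ := le_iff_tailSum_le.mpr fun k => by
    rw [tailSum_ofTailSumSeq]; exact min_le_right _ _
  le_inf _ _ _ h₁ h₂ := le_iff_tailSum_le.mpr fun k => by
    rw [tailSum_ofTailSumSeq]
    exact le_min (le_iff_tailSum_le.mp h₁ k) (le_iff_tailSum_le.mp h₂ k)

theorem strictMono_tailSum : StrictMono fun (ρ : PartitionN n) (k : Fin n) => tailSum ρ.1 k := by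
  refine Monotone.strictMono_of_injective (fun _ _ h k => le_iff_tailSum_le.mp h k) ?_
  refine fun ρ σ h => Subtype.ext (tailSum_injective (funext fun k => ?_))
  by_cases hk : k < n
  · exact congrFun h ⟨k, hk⟩
  · rw [tailSum_of_le _ (not_lt.mp hk), tailSum_of_le _ (not_lt.mp hk)]

instance : WellFoundedLT (PartitionN n) :=
  strictMono_tailSum.wellFoundedLT

theorem bddAbove_pair (μ lam : PartitionN n) : BddAbove {μ, lam} := by
  refine ⟨⟨μ.1 + lam.1, μ.2.add lam.2⟩, ?_⟩
  rintro ρ (rfl | rfl) <;> refine le_iff_tailSum_le.mpr fun k => ?_ <;>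
    simp only [tailSum_add] <;> omega

end PartitionN

/-- The set `P_n` of partitions with `n` parts, ordered by dominance, forms a
lattice: dominance is reflexive, transitive and antisymmetric on `P_n`, and any
two partitions have a join (least upper bound) and a meet (greatest lower
bound) in the dominance order. -/
theorem dominance_order_is_lattice (n : ℕ) :
    (∀ μ : PartitionN n, dominates n μ.1 μ.1) ∧
    (∀ μ ν ρ : PartitionN n, dominates n μ.1 ν.1 → dominates n ν.1 ρ.1 →
      dominates n μ.1 ρ.1) ∧
    (∀ μ lam : PartitionN n, dominates n μ.1 lam.1 → dominates n lam.1 μ.1 →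
      μ = lam) ∧
    (∀ μ lam : PartitionN n, ∃ j : PartitionN n,
      dominates n μ.1 j.1 ∧ dominates n lam.1 j.1 ∧
      ∀ ρ : PartitionN n, dominates n μ.1 ρ.1 → dominates n lam.1 ρ.1 →
        dominates n j.1 ρ.1) ∧
    (∀ μ lam : PartitionN n, ∃ m : PartitionN n,
      dominates n m.1 μ.1 ∧ dominates n m.1 lam.1 ∧
      ∀ ρ : PartitionN n, dominates n ρ.1 μ.1 → dominates n ρ.1 lam.1 →
        dominates n ρ.1 m.1) := by
  simp only [← PartitionN.le_def]
  refine ⟨le_refl, fun _ _ _ => le_trans, fun _ _ => le_antisymm, fun μ lam => ?_,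
    fun μ lam => ⟨μ ⊓ lam, inf_le_left, inf_le_right, fun _ => le_inf⟩⟩
  obtain ⟨j, hj_ub, hj_least⟩ := (PartitionN.bddAbove_pair μ lam).exists_isLUB
  refine ⟨j, hj_ub (by simp), hj_ub (by simp), fun ρ h₁ h₂ => hj_least ?_⟩
  rintro _ (rfl | rfl)
  exacts [h₁, h₂]
end

section
/- If I and J are symmetric strongly shifted monomial ideals in K[x_1,...,x_n], then the product IJ is a symmetric strongly shifted ideal. -/
open MvPolynomial

/-- The monomial `x^a` in `K[x_1,...,x_n]`. -/
noncomputable def mon (K : Type) [Field K] (n : ℕ) (a : Fin n → ℕ) :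
    MvPolynomial (Fin n) K :=
  monomial (Finsupp.equivFunOnFinite.symm a) 1

/-- A monomial ideal: an ideal generated by monomials. -/
def IsMonomialIdeal (K : Type) [Field K] (n : ℕ)
    (I : Ideal (MvPolynomial (Fin n) K)) : Prop :=
  ∃ S : Set (Fin n → ℕ), I = Ideal.span (mon K n '' S)

/-- A symmetric (`𝔖_n`-fixed) ideal. -/
def IsSymmetricIdeal (K : Type) [Field K] (n : ℕ)
    (I : Ideal (MvPolynomial (Fin n) K)) : Prop :=
  ∀ σ : Equiv.Perm (Fin n), Ideal.map (rename (σ : Fin n → Fin n)) I = I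

/-- The exponent vector obtained from `a` by the Borel move `x^a ↦ x^a · x_i / x_j`. -/
def borelMoveVec (n : ℕ) (a : Fin n → ℕ) (i j : Fin n) : Fin n → ℕ :=
  fun k => if k = i then a k + 1 else if k = j then a k - 1 else a k

/-- A symmetric strongly shifted ideal (sssi). -/
def IsSSSI (K : Type) [Field K] (n : ℕ)
    (I : Ideal (MvPolynomial (Fin n) K)) : Prop :=
  IsMonomialIdeal K n I ∧ IsSymmetricIdeal K n I ∧
    ∀ lam : Fin n → ℕ, Monotone lam → mon K n lam ∈ I →
      ∀ i j : Fin n, i < j → lam i < lam j →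
        mon K n (borelMoveVec n lam i j) ∈ I

open Pointwise

/-! If `x^λ ∈ IJ`, then `x^a x^b ∣ x^λ` for some `x^a ∈ I` and `x^b ∈ J`. When `a_i < a_j`, the
Borel move of `x^a` stays in `I`: by symmetry it may be performed on the sorted rearrangement of
`a`, where the strong shift applies. Then `x^{a'} x^b ∣ x^λ · x_i / x_j`, and likewise when
`b_i < b_j`. Otherwise `a_j + b_j ≤ a_i + b_i ≤ λ_i < λ_j`, so `x^a x^b` itself divides
`x^λ · x_i / x_j`. -/

section BorelMove

variable {n : ℕ} {a b c : Fin n → ℕ} {i j : Fin n}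

lemma borelMoveVec_mono (h : a ≤ c) : borelMoveVec n a i j ≤ borelMoveVec n c i j := by
  intro k
  have : a k ≤ c k := h k
  simp only [borelMoveVec]
  split_ifs <;> omega

lemma borelMoveVec_add (ha : 0 < a j) :
    borelMoveVec n (a + b) i j = borelMoveVec n a i j + b := by
  funext k
  simp only [borelMoveVec, Pi.add_apply]
  split_ifs <;> subst_vars <;> omega

lemma le_borelMoveVec (h : a ≤ c) (hj : a j < c j) : a ≤ borelMoveVec n c i j := by
  intro k
  have : a k ≤ c k := h k
  simp only [borelMoveVec]
  split_ifs <;> subst_vars <;> omega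

lemma borelMoveVec_comp_perm (σ : Equiv.Perm (Fin n)) :
    borelMoveVec n (a ∘ σ) (σ.symm i) (σ.symm j) = borelMoveVec n a i j ∘ σ := by
  funext k
  simp only [borelMoveVec, Function.comp_apply, Equiv.eq_symm_apply]

end BorelMove

section Monomial

variable {K : Type} [Field K] {n : ℕ}

lemma mon_add (a b : Fin n → ℕ) : mon K n (a + b) = mon K n a * mon K n b := by
  rw [mon, mon, mon, monomial_mul, one_mul]
  congr
  ext k
  simp

lemma rename_mon (σ : Equiv.Perm (Fin n)) (a : Fin n → ℕ) :
    rename (σ : Fin n → Fin n) (mon K n a) = mon K n (a ∘ σ.symm) := by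
  rw [mon, rename_monomial, ← Finsupp.equivMapDomain_eq_mapDomain, mon]
  congr
  ext k
  simp

lemma mon_mem_of_le {I : Ideal (MvPolynomial (Fin n) K)} {a c : Fin n → ℕ}
    (ha : mon K n a ∈ I) (h : a ≤ c) : mon K n c ∈ I := by
  rw [← tsub_add_cancel_of_le h, mon_add]
  exact I.mul_mem_left _ ha

lemma IsSymmetricIdeal.mon_comp_mem {I : Ideal (MvPolynomial (Fin n) K)}
    (hI : IsSymmetricIdeal K n I) {a : Fin n → ℕ} (ha : mon K n a ∈ I)
    (σ : Equiv.Perm (Fin n)) : mon K n (a ∘ σ) ∈ I := by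
  rw [← hI σ.symm, ← σ.symm_symm, ← rename_mon]
  exact Ideal.mem_map_of_mem _ ha

lemma IsSymmetricIdeal.mul {I J : Ideal (MvPolynomial (Fin n) K)}
    (hI : IsSymmetricIdeal K n I) (hJ : IsSymmetricIdeal K n J) :
    IsSymmetricIdeal K n (I * J) := fun σ => by
  rw [Ideal.map_mul, hI σ, hJ σ]

lemma span_mon_image_mul (S T : Set (Fin n → ℕ)) :
    Ideal.span (mon K n '' S) * Ideal.span (mon K n '' T) =
      Ideal.span (mon K n '' (S + T)) := by
  rw [Ideal.span_mul_span', ← Set.image2_mul, Set.image2_image_left, Set.image2_image_right,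
    ← Set.image2_add, Set.image_image2]
  simp only [mon_add]

lemma IsMonomialIdeal.mul {I J : Ideal (MvPolynomial (Fin n) K)}
    (hI : IsMonomialIdeal K n I) (hJ : IsMonomialIdeal K n J) :
    IsMonomialIdeal K n (I * J) := by
  obtain ⟨⟨S, rfl⟩, ⟨T, rfl⟩⟩ := And.intro hI hJ
  exact ⟨S + T, span_mon_image_mul S T⟩

lemma mon_mem_span_mon_image_iff {S : Set (Fin n → ℕ)} {c : Fin n → ℕ} :
    mon K n c ∈ Ideal.span (mon K n '' S) ↔ ∃ a ∈ S, a ≤ c := by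
  classical
  rw [show mon K n = (fun s => monomial s 1) ∘ Finsupp.equivFunOnFinite.symm from rfl,
    Set.image_comp, Function.comp_apply, mem_ideal_span_monomial_image,
    support_monomial, if_neg (one_ne_zero (α := K))]
  simp only [Finset.mem_singleton, forall_eq, Set.exists_mem_image, ← Finsupp.coe_le_coe,
    Finsupp.coe_equivFunOnFinite_symm]

lemma IsMonomialIdeal.exists_le_of_mon_mem_mul {I J : Ideal (MvPolynomial (Fin n) K)}
    (hI : IsMonomialIdeal K n I) (hJ : IsMonomialIdeal K n J) {c : Fin n → ℕ}
    (hc : mon K n c ∈ I * J) :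
    ∃ a b, mon K n a ∈ I ∧ mon K n b ∈ J ∧ a + b ≤ c := by
  obtain ⟨⟨S, rfl⟩, ⟨T, rfl⟩⟩ := And.intro hI hJ
  rw [span_mon_image_mul, mon_mem_span_mon_image_iff] at hc
  obtain ⟨_, ⟨a, ha, b, hb, rfl⟩, hle⟩ := hc
  exact ⟨a, b, Ideal.subset_span ⟨a, ha, rfl⟩, Ideal.subset_span ⟨b, hb, rfl⟩, hle⟩

lemma mon_mem_mul_of_add_le {I J : Ideal (MvPolynomial (Fin n) K)} {a b c : Fin n → ℕ}
    (ha : mon K n a ∈ I) (hb : mon K n b ∈ J) (h : a + b ≤ c) : mon K n c ∈ I * J :=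
  mon_mem_of_le (by rw [mon_add]; exact Ideal.mul_mem_mul ha hb) h

end Monomial

lemma IsSSSI.mon_borelMoveVec_mem {K : Type} [Field K] {n : ℕ}
    {I : Ideal (MvPolynomial (Fin n) K)} (hI : IsSSSI K n I) {a : Fin n → ℕ} (ha : mon K n a ∈ I)
    {i j : Fin n} (hij : a i < a j) : mon K n (borelMoveVec n a i j) ∈ I := by
  obtain ⟨-, hsym, hshift⟩ := hI
  set τ := Tuple.sort a
  have hmono : Monotone (a ∘ τ) := Tuple.monotone_sort a
  have hlt : (a ∘ τ) (τ.symm i) < (a ∘ τ) (τ.symm j) := by simpa using hij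
  have hmove := hshift _ hmono (hsym.mon_comp_mem ha τ) _ _ (hmono.reflect_lt hlt) hlt
  rw [borelMoveVec_comp_perm] at hmove
  simpa only [Function.comp_assoc, τ.self_comp_symm, Function.comp_id] using
    hsym.mon_comp_mem hmove τ.symm

/-- The product of two symmetric strongly shifted monomial ideals in
`K[x_1,...,x_n]` is symmetric strongly shifted. -/
theorem product_of_sssi (K : Type) [Field K] (n : ℕ)
    (I J : Ideal (MvPolynomial (Fin n) K))
    (hI : IsSSSI K n I) (hJ : IsSSSI K n J) :
    IsSSSI K n (I * J) := by
  refine ⟨hI.1.mul hJ.1, hI.2.1.mul hJ.2.1, fun lam _ hlam i j _ hij => ?_⟩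
  obtain ⟨a, b, ha, hb, hle⟩ := hI.1.exists_le_of_mon_mem_mul hJ.1 hlam
  by_cases hai : a i < a j
  · refine mon_mem_mul_of_add_le (hI.mon_borelMoveVec_mem ha hai) hb ?_
    rw [← borelMoveVec_add (by omega)]
    exact borelMoveVec_mono hle
  by_cases hbi : b i < b j
  · refine mon_mem_mul_of_add_le ha (hJ.mon_borelMoveVec_mem hb hbi) ?_
    rw [add_comm, ← borelMoveVec_add (by omega), add_comm]
    exact borelMoveVec_mono hle
  have hlei : a i + b i ≤ lam i := hle i
  exact mon_mem_mul_of_add_le ha hb (le_borelMoveVec hle (by simp only [Pi.add_apply]; omega))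
end

section
/- The Newton polytope of the principal Borel symmetric strongly shifted ideal Sss({λ}) equals the permutohedron P(λ) = conv{(λ_{σ(1)},...,λ_{σ(n)}) : σ ∈ 𝔖_n}. -/
open Finset

section Majorization

variable {R : Type*} [CommRing R] [PartialOrder R] [IsOrderedRing R]

theorem sum_mul_nonneg_of_monotone_of_sum_Ici_nonneg {n : ℕ} {w c : Fin n → R}
    (hw : Monotone w) (hw₀ : ∀ i, 0 ≤ w i) (hc : ∀ k, 0 ≤ ∑ i ∈ Ici k, c i) :
    0 ≤ ∑ i, w i * c i := by
  induction n with
  | zero => simp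
  | succ n ih =>
    have htail (k : Fin n) : ∑ i ∈ Ici k, c i.succ = ∑ i ∈ Ici k.succ, c i := by
      rw [← Fin.map_succEmb_Ici, sum_map]; rfl
    have hsplit : ∑ i, w i * c i =
        w 0 * ∑ i, c i + ∑ i : Fin n, (w i.succ - w 0) * c i.succ := by
      simp only [Fin.sum_univ_succ, sub_mul, sum_sub_distrib, mul_add, mul_sum]
      ring
    rw [hsplit]
    refine add_nonneg (mul_nonneg (hw₀ 0) (by simpa using hc 0)) (ih ?_ ?_ ?_)
    · exact fun i j hij => sub_le_sub_right (hw (Fin.succ_le_succ_iff.2 hij)) _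
    · exact fun i => sub_nonneg.2 (hw (Fin.zero_le _))
    · exact fun k => (htail k).symm ▸ hc k.succ

theorem sum_mul_le_sum_mul_of_sum_Ici_le {n : ℕ} {w a b : Fin n → R} (hw : Monotone w)
    (hab : ∀ k, ∑ i ∈ Ici k, a i ≤ ∑ i ∈ Ici k, b i) (hsum : ∑ i, a i = ∑ i, b i) :
    ∑ i, w i * a i ≤ ∑ i, w i * b i := by
  cases n with
  | zero => simp
  | succ n =>
    -- shifting `w` by the constant `w 0` changes both sides by `w 0 * ∑ i, a i`
    have key := sum_mul_nonneg_of_monotone_of_sum_Ici_nonneg (w := fun i => w i - w 0)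
      (c := b - a) (fun i j hij => sub_le_sub_right (hw hij) _)
      (fun i => sub_nonneg.2 (hw (Fin.zero_le _)))
      (fun k => by simpa [sum_sub_distrib] using hab k)
    simp only [Pi.sub_apply, sub_mul, mul_sub, sum_sub_distrib, ← mul_sum, hsum] at key
    rwa [sub_sub_sub_cancel_right, sub_nonneg] at key

end Majorization

theorem exists_perm_sum_mul_comp_le {R : Type*} [CommRing R] [LinearOrder R]
    [IsStrictOrderedRing R] {n : ℕ} (w : Fin n → R) {a b : Fin n → R} (ha : Monotone a)
    (hab : ∀ k, ∑ i ∈ Ici k, a i ≤ ∑ i ∈ Ici k, b i) (hsum : ∑ i, a i = ∑ i, b i)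
    (σ : Equiv.Perm (Fin n)) :
    ∃ τ : Equiv.Perm (Fin n), ∑ i, w i * a (σ i) ≤ ∑ i, w i * b (τ i) := by
  set s := Tuple.sort w
  refine ⟨s⁻¹, ?_⟩
  calc ∑ i, w i * a (σ i) = ∑ j, w (s j) * a ((σ * s) j) :=
        (Equiv.sum_comp s fun i => w i * a (σ i)).symm
    _ ≤ ∑ j, w (s j) * a j :=
        ((Tuple.monotone_sort w).monovary ha).sum_mul_comp_perm_le_sum_mul
    _ ≤ ∑ j, w (s j) * b j := sum_mul_le_sum_mul_of_sum_Ici_le (Tuple.monotone_sort w) hab hsum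
    _ = ∑ i, w i * b (s⁻¹ i) := by
        rw [← Equiv.sum_comp s fun i => w i * b (s⁻¹ i)]; simp

theorem mem_convexHull_of_forall_exists_le {E : Type*} [TopologicalSpace E] [AddCommGroup E]
    [Module ℝ E] [IsTopologicalAddGroup E] [ContinuousSMul ℝ E] [LocallyConvexSpace ℝ E]
    [T2Space E] {s : Set E} (hs : s.Finite) {x : E}
    (h : ∀ f : StrongDual ℝ E, ∃ y ∈ s, f x ≤ f y) : x ∈ convexHull ℝ s := by
  by_contra hx
  obtain ⟨f, u, hfs, hfx⟩ := geometric_hahn_banach_closed_point (convex_convexHull ℝ s)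
    (hs.isCompact_convexHull (𝕜 := ℝ)).isClosed hx
  obtain ⟨y, hy, hxy⟩ := h f
  linarith [hfs y (subset_convexHull ℝ s hy)]

/-- The Newton polytope of the principal Borel symmetric strongly shifted
ideal `Sss({λ})` — the convex hull of the exponent vectors of its minimal
monomial generators, which are exactly the monomials `σ(x^μ)` with `μ ∈ P_n`,
`|μ| = |λ|` and `μ ⊴ λ` — equals the permutohedron
`P(λ) = conv{(λ_{σ(1)},…,λ_{σ(n)}) : σ ∈ 𝔖_n}`. -/
theorem newtonPolytope_principalBorel_eq_permutohedron (n : ℕ)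
    (lam : Fin n → ℕ) (hlam : Monotone lam) :
    convexHull ℝ {v : Fin n → ℝ |
        ∃ (μ : Fin n → ℕ) (σ : Equiv.Perm (Fin n)), Monotone μ ∧
          ∑ i, μ i = ∑ i, lam i ∧ dominates n μ lam ∧
          v = fun k => (μ (σ k) : ℝ)} =
      convexHull ℝ {v : Fin n → ℝ |
        ∃ σ : Equiv.Perm (Fin n), v = fun k => (lam (σ k) : ℝ)} := by
  set orbit := {v : Fin n → ℝ | ∃ σ : Equiv.Perm (Fin n), v = fun k => (lam (σ k) : ℝ)}
  have horbit : orbit.Finite :=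
    (Set.finite_range fun σ : Equiv.Perm (Fin n) => fun k => (lam (σ k) : ℝ)).subset
      fun _ ⟨σ, hv⟩ => ⟨σ, hv.symm⟩
  refine (convexHull_min ?_ (convex_convexHull ℝ _)).antisymm
    (convexHull_mono fun v ⟨σ, hv⟩ => ⟨lam, σ, hlam, rfl, fun _ => le_rfl, hv⟩)
  rintro _ ⟨μ, σ, hμ, hsum, hdom, rfl⟩
  refine mem_convexHull_of_forall_exists_le horbit fun f => ?_
  obtain ⟨τ, hτ⟩ := exists_perm_sum_mul_comp_le (fun i => f (Pi.single i 1))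
    (a := fun i => (μ i : ℝ)) (b := fun i => (lam i : ℝ)) (fun i j hij => Nat.cast_le.2 (hμ hij))
    (fun k => by exact_mod_cast hdom k) (by exact_mod_cast hsum) σ
  have hf (x : Fin n → ℝ) : f x = ∑ i, f (Pi.single i 1) * x i := by
    conv_lhs => rw [pi_eq_sum_univ' x]
    simp [mul_comm]
  exact ⟨_, ⟨τ, rfl⟩, by rwa [hf, hf]⟩
end
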